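/- Let σ be a Hermitian d × d matrix with σ² = I, and let ρ be any d × d complex matrix. Then i(σρ − ρσ) = e^{iπσ/4} ρ e^{−iπσ/4} − e^{−iπσ/4} ρ e^{iπσ/4}; equivalently, writing G(α) := e^{−iασ/2}, one has i[σ, ρ] = G(−π/2) ρ G(−π/2)† − G(π/2) ρ G(π/2)†. -/

import Mathlib

open Matrix Complex Nat

noncomputable section

/-- The rotation gate `G(α) = e^{-iασ/2}` generated by `σ`. -/
def rotGate (d : ℕ) (σ : Matrix (Fin d) (Fin d) ℂ) (α : ℝ) :
    Matrix (Fin d) (Fin d) ℂ :=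
  NormedSpace.exp ((-(α / 2 : ℝ) * Complex.I : ℂ) • σ)

/-! For an involution `x` the exponential series splits into even powers, all equal to `1`, and
odd powers, all equal to `x`, so `e^{iθx} = cos θ + i sin θ x`. Expanding the two conjugations then
gives `e^{iθx} y e^{-iθx} - e^{-iθx} y e^{iθx} = sin 2θ · i[x, y]`, and `θ = π/4` is the theorem.
For Hermitian `σ` the adjoint of `G(α)` is `G(-α)`, which turns the second form into the first. -/

section Involution

variable {A : Type*} [Ring A] [Algebra ℂ A] [TopologicalSpace A] [IsTopologicalRing A]
  [ContinuousSMul ℂ A] [T2Space A] {x : A}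

theorem exp_smul_of_mul_self_eq_one (hx : x * x = 1) (z : ℂ) :
    NormedSpace.exp (z • x) = cosh z • (1 : A) + sinh z • x := by
  have hx2 : x ^ 2 = 1 := by rw [sq, hx]
  have hEven : HasSum (fun k : ℕ => (((2 * k)! : ℂ)⁻¹) • (z • x) ^ (2 * k)) (cosh z • (1 : A)) :=
    ((hasSum_cosh z).smul_const (1 : A)).congr_fun fun k => by
      rw [smul_pow, pow_mul x, hx2, one_pow, smul_smul, div_eq_mul_inv, mul_comm]
  have hOdd : HasSum (fun k : ℕ => (((2 * k + 1)! : ℂ)⁻¹) • (z • x) ^ (2 * k + 1))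
      (sinh z • x) :=
    ((hasSum_sinh z).smul_const x).congr_fun fun k => by
      rw [smul_pow, pow_succ x, pow_mul, hx2, one_pow, one_mul, smul_smul, div_eq_mul_inv,
        mul_comm]
  rw [NormedSpace.exp_eq_tsum ℂ]
  exact (HasSum.even_add_odd (f := fun n => ((n ! : ℂ)⁻¹) • (z • x) ^ n) hEven hOdd).tsum_eq

theorem exp_mul_I_smul_of_mul_self_eq_one (hx : x * x = 1) (θ : ℂ) :
    NormedSpace.exp ((θ * I) • x) = cos θ • (1 : A) + (sin θ * I) • x := by
  rw [exp_smul_of_mul_self_eq_one hx, cosh_mul_I, sinh_mul_I]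

theorem exp_conj_sub_exp_conj_of_mul_self_eq_one (hx : x * x = 1) (θ : ℂ) (y : A) :
    NormedSpace.exp ((θ * I) • x) * y * NormedSpace.exp ((-(θ * I)) • x) -
        NormedSpace.exp ((-(θ * I)) • x) * y * NormedSpace.exp ((θ * I) • x) =
      (sin (2 * θ) * I) • (x * y - y * x) := by
  rw [← neg_mul, exp_mul_I_smul_of_mul_self_eq_one hx, exp_mul_I_smul_of_mul_self_eq_one hx,
    cos_neg, sin_neg, sin_two_mul]
  simp only [add_mul, mul_add, smul_mul_assoc, mul_smul_comm, one_mul, mul_one]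
  module

end Involution

theorem rotGate_conjTranspose {d : ℕ} {σ : Matrix (Fin d) (Fin d) ℂ} (hσ : σᴴ = σ) (α : ℝ) :
    (rotGate d σ α)ᴴ = rotGate d σ (-α) := by
  rw [rotGate, rotGate, ← exp_conjTranspose, conjTranspose_smul, hσ]
  congr 2
  rw [star_mul', star_def, map_neg, conj_I, conj_ofReal]
  push_cast
  ring

/-- For a Hermitian involution `σ` (`σ† = σ`, `σ² = I`) and any matrix
`ρ`: `i[σ,ρ] = e^{iπσ/4} ρ e^{−iπσ/4} − e^{−iπσ/4} ρ e^{iπσ/4}`, i.e. with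
`G(α) = e^{−iασ/2}`, `i[σ,ρ] = G(−π/2) ρ G(−π/2)† − G(π/2) ρ G(π/2)†`. -/
theorem stmt14 (d : ℕ) (σ ρ : Matrix (Fin d) (Fin d) ℂ)
    (hherm : σᴴ = σ) (hinv : σ * σ = 1) :
    Complex.I • (σ * ρ - ρ * σ) =
      NormedSpace.exp ((Complex.I * ((Real.pi / 4 : ℝ) : ℂ)) • σ) * ρ *
          NormedSpace.exp ((-(Complex.I * ((Real.pi / 4 : ℝ) : ℂ))) • σ) -
        NormedSpace.exp ((-(Complex.I * ((Real.pi / 4 : ℝ) : ℂ))) • σ) * ρ *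
          NormedSpace.exp ((Complex.I * ((Real.pi / 4 : ℝ) : ℂ)) • σ) ∧
    Complex.I • (σ * ρ - ρ * σ) =
      rotGate d σ (-(Real.pi / 2)) * ρ * (rotGate d σ (-(Real.pi / 2)))ᴴ -
        rotGate d σ (Real.pi / 2) * ρ * (rotGate d σ (Real.pi / 2))ᴴ := by
  have hπ : sin (2 * ((Real.pi / 4 : ℝ) : ℂ)) = 1 := by
    rw [show 2 * ((Real.pi / 4 : ℝ) : ℂ) = ((Real.pi / 2 : ℝ) : ℂ) by push_cast; ring,
      ← ofReal_sin, Real.sin_pi_div_two, ofReal_one]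
  have hconj := exp_conj_sub_exp_conj_of_mul_self_eq_one hinv ((Real.pi / 4 : ℝ) : ℂ) ρ
  rw [hπ, one_mul, mul_comm _ I] at hconj
  refine ⟨hconj.symm, ?_⟩
  have hGminus : rotGate d σ (-(Real.pi / 2)) =
      NormedSpace.exp ((I * ((Real.pi / 4 : ℝ) : ℂ)) • σ) := by
    rw [rotGate]; congr 2; push_cast; ring
  have hGplus : rotGate d σ (Real.pi / 2) =
      NormedSpace.exp ((-(I * ((Real.pi / 4 : ℝ) : ℂ))) • σ) := by
    rw [rotGate]; congr 2; push_cast; ring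
  rw [rotGate_conjTranspose hherm, rotGate_conjTranspose hherm, neg_neg, hGminus, hGplus]
  exact hconj.symm

end
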